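/- arXiv:1903.06579 — 6 statements merged into one kernel-verified Lean document; each statement's English description precedes it below -/
import Mathlib

section
/- Let G=(V,E) be a connected simple graph not isomorphic to a star, and let G'=(V',E') = σ(G). Let S ⊊ V' be a vertex set with M ∪ {z1,z2} ⊆ S. Then a vertex e ∈ M is satisfied in G'[S] (i.e., d_S(e)·|V'∖S| ≥ d_{V'∖S}(e)·(|S|−1)) if and only if d_S(e) ≥ |S|−2. -/
open SimpleGraph

/-- Number of neighbors of `v` inside `T`. -/
noncomputable def degIn {W : Type*} (G : SimpleGraph W) (T : Set W) (v : W) : ℕ :=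
  (T ∩ G.neighborSet v).ncard

/-- `G[S]` is a proportionally dense subgraph. -/
def IsPDS {W : Type*} (G : SimpleGraph W) (S : Set W) : Prop :=
  S ⊂ Set.univ ∧ 2 ≤ S.ncard ∧
    ∀ u ∈ S, degIn G Sᶜ u * (S.ncard - 1) ≤ degIn G S u * Sᶜ.ncard

/-- A star is a complete bipartite graph `K_{1,ℓ}`, `ℓ ≥ 1`. -/
def IsStar {V : Type*} (G : SimpleGraph V) : Prop :=
  ∃ ℓ : ℕ, 1 ≤ ℓ ∧ Nonempty (G ≃g completeBipartiteGraph Unit (Fin ℓ))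

/-- Vertex type of the split graph `σ(G)`: `z1, z2` (the two booleans), `M` (edge
vertices), and `N = V`. -/
abbrev SigmaVert (V : Type*) (G : SimpleGraph V) : Type _ := (Bool ⊕ ↥G.edgeSet) ⊕ V

/-- The split graph `σ(G)`. -/
def sigmaGraph {V : Type*} (G : SimpleGraph V) : SimpleGraph (SigmaVert V G) where
  Adj x y :=
    match x, y with
    | Sum.inl a, Sum.inl b => a ≠ b
    | Sum.inl (Sum.inr e), Sum.inr u => u ∉ (e : Sym2 V)
    | Sum.inr u, Sum.inl (Sum.inr e) => u ∉ (e : Sym2 V)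
    | _, _ => False
  symm := by
    constructor
    rintro ((a | e) | u) ((b | f) | v) h <;> simp_all <;> tauto
  loopless := by
    constructor
    rintro ((a | e) | u) h <;> simp_all

/-- The set `M ∪ {z1, z2}` (the clique side) in `σ(G)`. -/
def sigmaClique {V : Type*} (G : SimpleGraph V) : Set (SigmaVert V G) :=
  Set.range Sum.inl

/-- The set `M` of edge-vertices in `σ(G)`. -/
def sigmaM {V : Type*} (G : SimpleGraph V) : Set (SigmaVert V G) :=
  Set.range (fun e : ↥G.edgeSet => Sum.inl (Sum.inr e))

/-! The vertex `e = uv ∈ M` of `σ(G)` is adjacent to everything except itself, `u` and `v`.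
If `a` of these three lie in `S` and `b = 3 - a` outside, then `d_S(e) = |S| - a` and
`d_{V'∖S}(e) = |V'∖S| - b`, so satisfaction becomes arithmetic: it always holds for `a = 1`,
never for `a = 3`, and for `a = 2` it amounts to `|V'∖S| < |S|`. That holds because
`V'∖S ⊆ N` and a connected graph has `|V| ≤ |E| + 1 < |M ∪ {z1, z2}|`. -/

lemma degIn_eq_ncard_sub_ncard_inter {W : Type*} {G : SimpleGraph W} {v : W} {N : Set W}
    (hN : G.neighborSet v = Nᶜ) (hNfin : N.Finite) (T : Set W) :
    degIn G T v = T.ncard - (T ∩ N).ncard := by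
  rw [degIn, hN, ← Set.sdiff_eq, ← Set.sdiff_self_inter,
    Set.ncard_sdiff Set.inter_subset_left (hNfin.inter_of_right T)]

lemma satisfied_iff_of_add_eq_three {s c a b : ℕ} (hab : a + b = 3) (ha : 1 ≤ a)
    (hs : 3 ≤ s) (hc : 1 ≤ c) (hcs : c < s) :
    (c - b) * (s - 1) ≤ (s - a) * c ↔ s - 2 ≤ s - a := by
  obtain ⟨s, rfl⟩ := Nat.exists_eq_add_of_le hs
  obtain ⟨c, rfl⟩ := Nat.exists_eq_add_of_le hc
  obtain ⟨rfl, rfl⟩ | ⟨rfl, rfl⟩ | ⟨rfl, rfl⟩ :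
      (a = 1 ∧ b = 2) ∨ (a = 2 ∧ b = 1) ∨ (a = 3 ∧ b = 0) := by omega
  · refine iff_of_true ?_ (by omega)
    exact (Nat.mul_le_mul (by omega) le_rfl).trans_eq (Nat.mul_comm _ _)
  · refine iff_of_true ?_ (by omega)
    simp only [Nat.add_sub_cancel_left, show 3 + s - 1 = s + 2 by omega,
      show 3 + s - 2 = s + 1 by omega]
    nlinarith
  · refine iff_of_false ?_ (by omega)
    simp only [Nat.add_sub_cancel_left, Nat.sub_zero, show 3 + s - 1 = s + 2 by omega]
    nlinarith

lemma sigmaGraph_neighborSet_edge {V : Type*} (G : SimpleGraph V) (e : G.edgeSet) {u v : V}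
    (huv : (e : Sym2 V) = s(u, v)) :
    (sigmaGraph G).neighborSet (Sum.inl (Sum.inr e)) =
      ({Sum.inl (Sum.inr e), Sum.inr u, Sum.inr v} : Set (SigmaVert V G))ᶜ := by
  ext ((b | f) | w)
  · simp [sigmaGraph]
  · simp only [mem_neighborSet, sigmaGraph]
    simp [ne_comm]
  · simp only [mem_neighborSet, sigmaGraph, huv]
    simp

lemma ncard_sigmaClique {V : Type*} (G : SimpleGraph V) [Finite G.edgeSet] :
    (sigmaClique G).ncard = Nat.card G.edgeSet + 2 := by
  rw [sigmaClique, Set.ncard_range_of_injective Sum.inl_injective, Nat.card_sum, add_comm]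
  simp

lemma ncard_compl_le_of_sigmaClique_subset {V : Type*} [Finite V] (G : SimpleGraph V)
    {S : Set (SigmaVert V G)} (hS : sigmaClique G ⊆ S) : Sᶜ.ncard ≤ Nat.card V := by
  have hsub : Sᶜ ⊆ Set.range Sum.inr := by
    rintro ((b | f) | w) hw
    · exact absurd (hS ⟨Sum.inl b, rfl⟩) hw
    · exact absurd (hS ⟨Sum.inr f, rfl⟩) hw
    · exact ⟨w, rfl⟩
  exact (Set.ncard_le_ncard hsub).trans_eq (Set.ncard_range_of_injective Sum.inr_injective)

lemma three_le_ncard_of_sigmaClique_subset {V : Type*} [Finite V] (G : SimpleGraph V)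
    [Nonempty G.edgeSet] {S : Set (SigmaVert V G)} (hS : sigmaClique G ⊆ S) : 3 ≤ S.ncard := by
  have hclique := Set.ncard_le_ncard hS
  rw [ncard_sigmaClique] at hclique
  have := Nat.card_pos (α := G.edgeSet)
  omega

lemma SimpleGraph.Connected.ncard_compl_lt_ncard_of_sigmaClique_subset {V : Type*} [Finite V]
    {G : SimpleGraph V} (hG : G.Connected) {S : Set (SigmaVert V G)}
    (hS : sigmaClique G ⊆ S) : Sᶜ.ncard < S.ncard := by
  have hclique := Set.ncard_le_ncard hS
  have hcompl := ncard_compl_le_of_sigmaClique_subset G hS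
  have hV := hG.card_vert_le_card_edgeSet_add_one
  rw [ncard_sigmaClique] at hclique
  omega

theorem sigma_M_satisfied_iff_general {V : Type*} [Fintype V] (G : SimpleGraph V)
    (hconn : G.Connected)
    (S : Set (SigmaVert V G)) (hSne : S ⊂ Set.univ)
    (hMZ : sigmaClique G ⊆ S) (e : ↥G.edgeSet) :
    (degIn (sigmaGraph G) Sᶜ (Sum.inl (Sum.inr e)) * (S.ncard - 1)
        ≤ degIn (sigmaGraph G) S (Sum.inl (Sum.inr e)) * Sᶜ.ncard)
      ↔ S.ncard - 2 ≤ degIn (sigmaGraph G) S (Sum.inl (Sum.inr e)) := by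
  obtain ⟨⟨u, v⟩, huv⟩ := Quot.exists_rep (e : Sym2 V)
  set N : Set (SigmaVert V G) := {Sum.inl (Sum.inr e), Sum.inr u, Sum.inr v}
  have hN := sigmaGraph_neighborSet_edge G e huv.symm
  have hNcard : N.ncard = 3 := by
    have hne : u ≠ v := G.ne_of_adj (huv ▸ e.2 :)
    exact Set.ncard_eq_three.2 ⟨_, _, _, by simp, by simp, by simpa, rfl⟩
  have hsplit : (S ∩ N).ncard + (Sᶜ ∩ N).ncard = 3 := by
    rw [← hNcard, ← Set.ncard_inter_add_ncard_sdiff_eq_ncard N S, Set.sdiff_eq,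
      Set.inter_comm S, Set.inter_comm Sᶜ]
  have hin : 0 < (S ∩ N).ncard :=
    (Set.ncard_pos (Set.toFinite _)).2 ⟨_, hMZ ⟨Sum.inr e, rfl⟩, Or.inl rfl⟩
  have hc : 0 < Sᶜ.ncard := by
    obtain ⟨x, -, hx⟩ := Set.exists_of_ssubset hSne
    exact (Set.ncard_pos (Set.toFinite _)).2 ⟨x, hx⟩
  rw [degIn_eq_ncard_sub_ncard_inter hN (Set.toFinite N),
    degIn_eq_ncard_sub_ncard_inter hN (Set.toFinite N)]
  have : Nonempty G.edgeSet := ⟨e⟩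
  exact satisfied_iff_of_add_eq_three hsplit hin (three_le_ncard_of_sigmaClique_subset G hMZ)
    hc (hconn.ncard_compl_lt_ncard_of_sigmaClique_subset hMZ)

/-- Lemma 1 of the paper: with `M ∪ {z1,z2} ⊆ S ⊊ V'`, a vertex `e ∈ M` is
satisfied in `σ(G)[S]` iff `d_S(e) ≥ |S| - 2`. -/
theorem sigma_M_satisfied_iff {V : Type*} [Fintype V] (G : SimpleGraph V)
    (hconn : G.Connected) (hstar : ¬ IsStar G)
    (S : Set (SigmaVert V G)) (hSne : S ⊂ Set.univ)
    (hMZ : sigmaClique G ⊆ S) (e : ↥G.edgeSet) :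
    (degIn (sigmaGraph G) Sᶜ (Sum.inl (Sum.inr e)) * (S.ncard - 1)
        ≤ degIn (sigmaGraph G) S (Sum.inl (Sum.inr e)) * Sᶜ.ncard)
      ↔ S.ncard - 2 ≤ degIn (sigmaGraph G) S (Sum.inl (Sum.inr e)) :=
  sigma_M_satisfied_iff_general G hconn S hSne hMZ e
end

section
/- Let G=(V,E) be a connected simple graph not isomorphic to a star, let G'=(V',E') = σ(G), and let k be an integer with 1 ≤ k ≤ |V|−2. Then G has an independent set of size at least k if and only if there exists S ⊊ V' of size at least |E|+2+k such that G'[S] is a proportionally dense subgraph. -/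
open SimpleGraph

/-!
In `σ(G)` the clique vertex of an edge `xy` misses exactly the two endpoints `x, y`, while the
vertices `z₁, z₂` and `N` have no neighbours in `N`. For an independent set `I` of size `k` take
`S` to be everything except `N ∖ I`: only the edge vertices have neighbours outside `S`, and such
a vertex has at most one non-neighbour in `S` and at least one outside, which makes the PDS
inequality hold as soon as `|V ∖ I| < |S|`; this follows from `|V| ≤ |E| + 1` for connected `G`.
Conversely, the PDS inequality at an edge vertex of `S` fails if both its endpoints are in `S`;
so every edge of `G` inside `S ∩ N` corresponds to an edge vertex outside `S`, and deleting one
endpoint of each of these leaves an independent set of size at least `|S| - |E| - 2`.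
-/

theorem Set.ncard_preimage_inl_add_ncard_preimage_inr {α β : Type*} [Finite α] [Finite β]
    (T : Set (α ⊕ β)) : (Sum.inl ⁻¹' T).ncard + (Sum.inr ⁻¹' T).ncard = T.ncard := by
  rw [← Set.ncard_image_of_injective (Sum.inl ⁻¹' T) Sum.inl_injective,
    ← Set.ncard_image_of_injective (Sum.inr ⁻¹' T) Sum.inr_injective, ← Set.ncard_union_eq]
  · congr 1
    ext (a | b) <;> simp
  · rw [Set.disjoint_left]
    rintro _ ⟨a, -, rfl⟩ ⟨b, -, h⟩
    exact Sum.inr_ne_inl h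

theorem SimpleGraph.exists_isIndepSet_subset_ncard_le_add {V : Type*} (G : SimpleGraph V)
    (T : Set V) {F : Set (Sym2 V)} (hF : F.Finite)
    (hTF : ∀ a ∈ T, ∀ b ∈ T, G.Adj a b → s(a, b) ∈ F) :
    ∃ I ⊆ T, G.IsIndepSet I ∧ T.ncard ≤ I.ncard + F.ncard := by
  refine ⟨T \ (fun e => e.out.1) '' F, Set.sdiff_subset, ?_, ?_⟩
  · rintro a ⟨ha, haF⟩ b ⟨hb, hbF⟩ - hab
    rcases Sym2.mem_iff.1 (Sym2.out_fst_mem s(a, b)) with h | h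
    · exact haF ⟨_, hTF a ha b hb hab, h⟩
    · exact hbF ⟨_, hTF a ha b hb hab, h⟩
  · calc T.ncard ≤ (T \ (fun e => e.out.1) '' F).ncard + ((fun e => e.out.1) '' F).ncard :=
          Set.ncard_le_ncard_sdiff_add_ncard _ _ (hF.image _)
      _ ≤ _ := by gcongr; exact Set.ncard_image_le hF

section PDS

variable {W : Type*} [Finite W] (H : SimpleGraph W)

theorem degIn_add_ncard_inter_of_neighborSet_eq {T D : Set W} {u : W}
    (hN : H.neighborSet u = (insert u D)ᶜ) :
    degIn H T u + (T ∩ insert u D).ncard = T.ncard := by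
  rw [degIn, hN, ← Set.sdiff_eq, add_comm, Set.ncard_inter_add_ncard_sdiff_eq_ncard]

theorem pds_condition_iff_of_neighborSet_eq {S D : Set W} {u : W} (hu : u ∈ S) (huD : u ∉ D)
    (hN : H.neighborSet u = (insert u D)ᶜ) :
    degIn H Sᶜ u * (S.ncard - 1) ≤ degIn H S u * Sᶜ.ncard ↔
      (S ∩ D).ncard * Sᶜ.ncard ≤ (Sᶜ ∩ D).ncard * (S.ncard - 1) := by
  have hS := degIn_add_ncard_inter_of_neighborSet_eq H (T := S) hN
  have hSc := degIn_add_ncard_inter_of_neighborSet_eq H (T := Sᶜ) hN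
  rw [Set.inter_insert_of_mem hu, Set.ncard_insert_of_notMem (fun h => huD h.2)] at hS
  rw [Set.inter_insert_of_notMem (Set.notMem_compl_iff.2 hu)] at hSc
  rw [← hSc, show S.ncard - 1 = degIn H S u + (S ∩ D).ncard by omega]
  constructor <;> intro h <;> nlinarith

end PDS

section Sigma

variable {V : Type*} (G : SimpleGraph V)

theorem sigmaGraph_neighborSet_edge_s2 {x y : V} (h : G.Adj x y) :
    (sigmaGraph G).neighborSet (Sum.inl (Sum.inr ⟨s(x, y), h⟩)) =
      (insert (Sum.inl (Sum.inr ⟨s(x, y), h⟩)) {Sum.inr x, Sum.inr y})ᶜ := by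
  ext ((b | f) | v) <;>
    simp only [mem_neighborSet, Set.mem_compl_iff, Set.mem_insert_iff, Set.mem_singleton_iff,
      reduceCtorEq, Sum.inl.injEq, Sum.inr.injEq, or_false, false_or]
  · exact iff_of_true (by simp [sigmaGraph]) (by simp)
  · exact (Iff.rfl : _ ↔ Sum.inr _ ≠ Sum.inr _).trans (by simp [eq_comm])
  · exact (Iff.rfl : _ ↔ v ∉ s(x, y)).trans (by simp)

theorem mem_sigmaM_of_sigmaGraph_adj_inr {u : SigmaVert V G} {v : V}
    (h : (sigmaGraph G).Adj u (Sum.inr v)) : u ∈ sigmaM G := by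
  rcases u with (b | e) | w
  · exact h.elim
  · exact ⟨e, rfl⟩
  · exact h.elim

theorem sigmaGraph_pds_condition_edge_iff [Finite V] {S : Set (SigmaVert V G)} {x y : V}
    (h : G.Adj x y) (hS : Sum.inl (Sum.inr ⟨s(x, y), h⟩) ∈ S) :
    degIn (sigmaGraph G) Sᶜ (Sum.inl (Sum.inr ⟨s(x, y), h⟩)) * (S.ncard - 1) ≤
        degIn (sigmaGraph G) S (Sum.inl (Sum.inr ⟨s(x, y), h⟩)) * Sᶜ.ncard ↔
      (S ∩ {Sum.inr x, Sum.inr y}).ncard * Sᶜ.ncard ≤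
        (Sᶜ ∩ {Sum.inr x, Sum.inr y}).ncard * (S.ncard - 1) :=
  pds_condition_iff_of_neighborSet_eq _ hS (by simp) (sigmaGraph_neighborSet_edge_s2 G h)

theorem ncard_sigmaGraph_compl_image_compl [Fintype V] (I : Set V) :
    ((Sum.inr '' Iᶜ)ᶜ : Set (SigmaVert V G)).ncard = G.edgeSet.ncard + 2 + I.ncard := by
  have hinl : Sum.inl ⁻¹' (Sum.inr '' Iᶜ)ᶜ = (Set.univ : Set (Bool ⊕ G.edgeSet)) := by
    ext; simp
  have hinr : Sum.inr ⁻¹' ((Sum.inr '' Iᶜ)ᶜ : Set (SigmaVert V G)) = I := by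
    ext; simp
  rw [← Set.ncard_preimage_inl_add_ncard_preimage_inr, hinl, hinr, Set.ncard_univ, Nat.card_sum,
    Nat.card_eq_fintype_card (α := Bool), Fintype.card_bool, Nat.card_coe_set_eq, add_comm 2]

theorem isPDS_sigmaGraph_compl_image_compl [Fintype V] (hconn : G.Connected) {I : Set V}
    (hI : G.IsIndepSet I) (hIV : I.ncard < Fintype.card V) :
    IsPDS (sigmaGraph G) (Sum.inr '' Iᶜ)ᶜ := by
  set S : Set (SigmaVert V G) := (Sum.inr '' Iᶜ)ᶜ
  have hSc : Sᶜ = Sum.inr '' Iᶜ := compl_compl _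
  have hVE : Fintype.card V ≤ G.edgeSet.ncard + 1 := by
    simpa [Nat.card_coe_set_eq] using hconn.card_vert_le_card_edgeSet_add_one
  have hs : S.ncard = G.edgeSet.ncard + 2 + I.ncard := ncard_sigmaGraph_compl_image_compl G I
  have ht : Sᶜ.ncard + I.ncard = Fintype.card V := by
    rw [hSc, Set.ncard_image_of_injective _ Sum.inr_injective, add_comm,
      Set.ncard_add_ncard_compl, Nat.card_eq_fintype_card]
  refine ⟨Set.ssubset_univ_iff.2 (Set.nonempty_compl.1 ((Set.ncard_pos).1 (by omega))),
    by omega, fun u hu => ?_⟩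
  by_cases huM : u ∈ sigmaM G
  · obtain ⟨⟨e, he⟩, rfl⟩ := huM
    induction e using Sym2.ind with | _ x y => ?_
    refine (sigmaGraph_pds_condition_edge_iff G he hu).2 (Nat.mul_le_mul ?_ (by omega))
    set D : Set (SigmaVert V G) := {Sum.inr x, Sum.inr y}
    have hD : (S ∩ D).ncard + (Sᶜ ∩ D).ncard = 2 := by
      have := Set.ncard_inter_add_ncard_sdiff_eq_ncard D S
      rwa [Set.sdiff_eq, Set.ncard_pair (by simpa using he.ne), Set.inter_comm D,
        Set.inter_comm D] at this
    have hDc : (Sᶜ ∩ D).Nonempty := by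
      by_cases hx : x ∈ I
      · exact ⟨Sum.inr y, by simpa [hSc, D] using fun hy => hI hx hy he.ne he, by simp [D]⟩
      · exact ⟨Sum.inr x, by simpa [hSc] using hx, by simp [D]⟩
    have := (Set.ncard_pos).2 hDc
    omega
  · have hdeg : degIn (sigmaGraph G) Sᶜ u = 0 := by
      rw [degIn, Set.ncard_eq_zero, Set.eq_empty_iff_forall_notMem]
      rintro w ⟨hw, hadj⟩
      rw [hSc] at hw
      obtain ⟨v, -, rfl⟩ := hw
      exact huM (mem_sigmaM_of_sigmaGraph_adj_inr G hadj)
    simp [hdeg]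

theorem sigmaGraph_isPDS_edge_notMem [Finite V] {S : Set (SigmaVert V G)}
    (hS : IsPDS (sigmaGraph G) S) {x y : V} (h : G.Adj x y) (hx : Sum.inr x ∈ S)
    (hy : Sum.inr y ∈ S) : Sum.inl (Sum.inr ⟨s(x, y), h⟩) ∉ S := by
  intro he
  have hcond := (sigmaGraph_pds_condition_edge_iff G h he).1 (hS.2.2 _ he)
  have hD : S ∩ {Sum.inr x, Sum.inr y} = {Sum.inr x, Sum.inr y} :=
    Set.inter_eq_right.2 (Set.pair_subset hx hy)
  have hDc : Sᶜ ∩ {Sum.inr x, Sum.inr y} = ∅ :=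
    Set.eq_empty_iff_forall_notMem.2 fun w ⟨hw, hwD⟩ => hw (Set.pair_subset hx hy hwD)
  rw [hD, hDc, Set.ncard_pair (by simpa using h.ne), Set.ncard_empty, zero_mul] at hcond
  have := (Set.ncard_pos).2 (Set.nonempty_compl.2 hS.1.ne)
  omega

theorem exists_isIndepSet_of_isPDS_sigmaGraph [Finite V] {S : Set (SigmaVert V G)}
    (hS : IsPDS (sigmaGraph G) S) :
    ∃ I : Set V, G.IsIndepSet I ∧ S.ncard ≤ G.edgeSet.ncard + 2 + I.ncard := by
  have hS₁ := Set.ncard_preimage_inl_add_ncard_preimage_inr S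
  have hS₂ := Set.ncard_preimage_inl_add_ncard_preimage_inr (Sum.inl ⁻¹' S)
  set P : Set V := Sum.inr ⁻¹' S
  set M : Set G.edgeSet := Sum.inr ⁻¹' (Sum.inl ⁻¹' S)
  obtain ⟨I, -, hI, hPI⟩ := G.exists_isIndepSet_subset_ncard_le_add P
    (F := Subtype.val '' Mᶜ) (Set.toFinite _)
    fun a ha b hb hab => ⟨⟨s(a, b), hab⟩, sigmaGraph_isPDS_edge_notMem G hS hab ha hb, rfl⟩
  refine ⟨I, hI, ?_⟩
  have hF : (Subtype.val '' Mᶜ).ncard = Mᶜ.ncard :=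
    Set.ncard_image_of_injective _ Subtype.val_injective
  have hM : M.ncard + Mᶜ.ncard = G.edgeSet.ncard := by
    rw [Set.ncard_add_ncard_compl, Nat.card_coe_set_eq]
  have hB : (Sum.inl ⁻¹' (Sum.inl ⁻¹' S) : Set Bool).ncard ≤ 2 :=
    (Set.ncard_le_ncard (Set.subset_univ _)).trans (by simp)
  omega

end Sigma

theorem sigma_reduction_correct_general {V : Type*} [Fintype V] (G : SimpleGraph V)
    (hconn : G.Connected)
    (k : ℕ) (hk2 : k ≤ Fintype.card V - 2) :
    (∃ I : Set V, I.Pairwise (fun a b => ¬ G.Adj a b) ∧ k ≤ I.ncard)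
      ↔ (∃ S : Set (SigmaVert V G),
          IsPDS (sigmaGraph G) S ∧ G.edgeSet.ncard + 2 + k ≤ S.ncard) := by
  constructor
  · rintro ⟨I, hI, hkI⟩
    obtain ⟨J, hJI, rfl⟩ := Set.exists_subset_card_eq hkI
    have : 0 < Fintype.card V := Fintype.card_pos_iff.2 hconn.nonempty
    exact ⟨_, isPDS_sigmaGraph_compl_image_compl G hconn (hI.mono hJI) (by omega),
      (ncard_sigmaGraph_compl_image_compl G J).ge⟩
  · rintro ⟨S, hS, hsize⟩
    obtain ⟨I, hI, hSI⟩ := exists_isIndepSet_of_isPDS_sigmaGraph G hS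
    exact ⟨I, hI, by omega⟩

/-- Theorem 1 of the paper (correctness of the split-graph reduction): `G` has an
independent set of size at least `k` iff `σ(G)` has a PDS of size at least
`|E| + 2 + k`. -/
theorem sigma_reduction_correct {V : Type*} [Fintype V] (G : SimpleGraph V)
    (hconn : G.Connected) (hstar : ¬ IsStar G)
    (k : ℕ) (hk1 : 1 ≤ k) (hk2 : k ≤ Fintype.card V - 2) :
    (∃ I : Set V, I.Pairwise (fun a b => ¬ G.Adj a b) ∧ k ≤ I.ncard)
      ↔ (∃ S : Set (SigmaVert V G),
          IsPDS (sigmaGraph G) S ∧ G.edgeSet.ncard + 2 + k ≤ S.ncard) :=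
  sigma_reduction_correct_general G hconn k hk2
end

section
/- For every connected simple graph G=(V,E) with |V| ≥ 3, there exists S ⊊ V with |S| = ⌈|V|/2⌉ or |S| = ⌈|V|/2⌉ + 1 such that G[S] is a proportionally dense subgraph. -/
/-!
Take `S` with `|S| = ⌈n/2⌉` minimising the number of edges between `S` and `V ∖ S`. If every
vertex of `S` has at least as many neighbours inside `S` as outside, `S` is a PDS, because
`|S| - 1 ≤ |V ∖ S|`. Otherwise some `u ∈ S` has more neighbours outside. Exchanging `u` with any
`w ∉ S` does not decrease the cut, and this forces every vertex of `A = (V ∖ S) ∪ {u}` to have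
strictly more neighbours inside `A` than outside; as `|A| ≤ |V ∖ A| + 2`, `A` is a PDS.
-/

open SimpleGraph

open Finset

namespace SimpleGraph

variable {V : Type*} (G : SimpleGraph V) [DecidableRel G.Adj]

theorem card_interedges_comm (s t : Finset V) :
    #(G.interedges s t) = #(G.interedges t s) :=
  have := G.symm
  Rel.card_interedges_comm s t

variable [DecidableEq V]

theorem card_interedges_singleton_left (a : V) (t : Finset V) :
    #(G.interedges {a} t) = #{b ∈ t | G.Adj a b} := by
  rw [interedges, Rel.interedges_eq_biUnion, singleton_biUnion, card_map]

theorem card_interedges_union_left {s₁ s₂ : Finset V} (h : Disjoint s₁ s₂) (t : Finset V) :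
    #(G.interedges (s₁ ∪ s₂) t) = #(G.interedges s₁ t) + #(G.interedges s₂ t) := by
  rw [← card_union_of_disjoint (G.interedges_disjoint_left h t), interedges_def, interedges_def,
    interedges_def, union_product, filter_union]

theorem card_interedges_insert_left {a : V} {s : Finset V} (ha : a ∉ s) (t : Finset V) :
    #(G.interedges (insert a s) t) = #{b ∈ t | G.Adj a b} + #(G.interedges s t) := by
  rw [insert_eq, G.card_interedges_union_left (disjoint_singleton_left.mpr ha),
    card_interedges_singleton_left]

theorem card_interedges_insert_right {b : V} (s : Finset V) {t : Finset V} (hb : b ∉ t) :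
    #(G.interedges s (insert b t)) = #{a ∈ s | G.Adj b a} + #(G.interedges s t) := by
  rw [card_interedges_comm, G.card_interedges_insert_left hb, card_interedges_comm]

theorem card_filter_adj_insert (a : V) {b : V} {t : Finset V} (hb : b ∉ t) :
    #{x ∈ insert b t | G.Adj a x} = #{x ∈ t | G.Adj a x} + if G.Adj a b then 1 else 0 := by
  rw [filter_insert]
  split_ifs
  · exact card_insert_of_notMem fun h ↦ hb (mem_filter.mp h).1
  · rfl

theorem card_filter_adj_insert_self (a : V) (t : Finset V) :
    #{x ∈ insert a t | G.Adj a x} = #{x ∈ t | G.Adj a x} := by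
  rw [filter_insert, if_neg (G.irrefl)]

theorem card_filter_adj_erase_add (a : V) {b : V} {t : Finset V} (hb : b ∈ t) :
    #{x ∈ t.erase b | G.Adj a x} + (if G.Adj a b then 1 else 0) = #{x ∈ t | G.Adj a x} := by
  conv_rhs => rw [← insert_erase hb]
  rw [G.card_filter_adj_insert a (notMem_erase b t)]

theorem card_filter_adj_erase_self (a : V) (t : Finset V) :
    #{x ∈ t.erase a | G.Adj a x} = #{x ∈ t | G.Adj a x} := by
  rw [filter_erase, erase_eq_of_notMem fun h ↦ G.irrefl (mem_filter.mp h).2]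

/-- Exchanging `u` and `v` between the two sides of a cut. -/
theorem card_interedges_insert_insert_add {u v : V} {s t : Finset V} (hus : u ∉ s) (hut : u ∉ t)
    (hvs : v ∉ s) (hvt : v ∉ t) :
    #(G.interedges (insert u s) (insert v t)) + #{x ∈ s | G.Adj u x} + #{x ∈ t | G.Adj v x} =
      #(G.interedges (insert v s) (insert u t)) + #{x ∈ s | G.Adj v x} +
        #{x ∈ t | G.Adj u x} := by
  rw [G.card_interedges_insert_left hus, G.card_interedges_insert_left hvs,
    G.card_interedges_insert_right s hvt, G.card_interedges_insert_right s hut,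
    G.card_filter_adj_insert u hvt, G.card_filter_adj_insert v hut]
  simp only [G.adj_comm v u]
  ring

variable [Fintype V]

theorem card_filter_adj_compl_lt_of_min_cut {S : Finset V}
    (hmin : ∀ T : Finset V, #T = #S → #(G.interedges S Sᶜ) ≤ #(G.interedges T Tᶜ))
    {u : V} (hu : u ∈ S) (hgain : #{x ∈ S | G.Adj u x} < #{x ∈ Sᶜ | G.Adj u x}) :
    ∀ w ∈ insert u Sᶜ, #{x ∈ (insert u Sᶜ)ᶜ | G.Adj w x} < #{x ∈ insert u Sᶜ | G.Adj w x} := by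
  rw [compl_insert, compl_compl]
  intro w hw
  rcases mem_insert.mp hw with rfl | hwSc
  · rwa [card_filter_adj_erase_self, card_filter_adj_insert_self]
  -- Swapping `u` and `w` cannot decrease the cut; the surplus of `u` is then passed on to `w`.
  have huSc : u ∉ Sᶜ := by simpa using hu
  have hwS : w ∉ S := by simpa using hwSc
  have huw : u ≠ w := by rintro rfl; exact hwS hu
  have hswap := G.card_interedges_insert_insert_add (notMem_erase u S)
    (fun h ↦ huSc (mem_of_mem_erase h)) (fun h ↦ hwS (mem_of_mem_erase h)) (notMem_erase w Sᶜ)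
  have hTc : (insert w (S.erase u))ᶜ = insert u (Sᶜ.erase w) := by
    ext x; by_cases x = u <;> by_cases x = w <;> simp_all
  have hT : #(insert w (S.erase u)) = #S := by
    rw [card_insert_of_notMem fun h ↦ hwS (mem_of_mem_erase h), card_erase_add_one hu]
  have hcut := hmin _ hT
  rw [hTc] at hcut
  rw [insert_erase hu, insert_erase hwSc, card_filter_adj_erase_self,
    card_filter_adj_erase_self] at hswap
  have hout_u := G.card_filter_adj_erase_add u hwSc
  rw [G.card_filter_adj_insert w huSc]
  simp only [G.adj_comm w u]
  split_ifs at hout_u ⊢ <;> omega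

end SimpleGraph

theorem degIn_coe_finset {V : Type*} (G : SimpleGraph V) [DecidableRel G.Adj] (T : Finset V)
    (v : V) : degIn G T v = #{w ∈ T | G.Adj v w} := by
  rw [degIn, ← Set.ncard_coe_finset]
  congr 1
  ext w
  simp

section IsPDS

variable {V : Type*} [Fintype V] [DecidableEq V] (G : SimpleGraph V) [DecidableRel G.Adj]

theorem isPDS_coe_iff (S : Finset V) :
    IsPDS G S ↔ S ≠ univ ∧ 2 ≤ #S ∧
      ∀ u ∈ S, #{w ∈ Sᶜ | G.Adj u w} * (#S - 1) ≤ #{w ∈ S | G.Adj u w} * #Sᶜ := by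
  simp only [IsPDS, Set.ssubset_univ_iff, Ne, coe_eq_univ, Set.ncard_coe_finset, ← coe_compl,
    degIn_coe_finset, mem_coe]

theorem isPDS_of_forall_card_le {S : Finset V} (h2 : 2 ≤ #S) (hS : #S ≤ #Sᶜ + 1)
    (hdeg : ∀ u ∈ S, #{w ∈ Sᶜ | G.Adj u w} ≤ #{w ∈ S | G.Adj u w}) : IsPDS G S := by
  refine (isPDS_coe_iff G S).mpr ⟨?_, h2, fun u hu ↦ ?_⟩
  · rintro rfl
    rw [compl_univ, card_empty] at hS
    omega
  · exact Nat.mul_le_mul (hdeg u hu) (by omega)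

theorem isPDS_of_forall_card_lt {S : Finset V} (h2 : 2 ≤ #S) (hc : 0 < #Sᶜ)
    (hS : #S ≤ #Sᶜ + 2) (hdeg : ∀ u ∈ S, #{w ∈ Sᶜ | G.Adj u w} < #{w ∈ S | G.Adj u w}) :
    IsPDS G S := by
  refine (isPDS_coe_iff G S).mpr ⟨?_, h2, fun u hu ↦ ?_⟩
  · rintro rfl
    simp at hc
  have hout : #{w ∈ Sᶜ | G.Adj u w} ≤ #Sᶜ := card_filter_le _ _
  calc #{w ∈ Sᶜ | G.Adj u w} * (#S - 1)
      ≤ #{w ∈ Sᶜ | G.Adj u w} * #Sᶜ + #{w ∈ Sᶜ | G.Adj u w} := by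
        rw [← Nat.mul_succ]; gcongr; omega
    _ ≤ (#{w ∈ Sᶜ | G.Adj u w} + 1) * #Sᶜ := by rw [Nat.succ_mul]; gcongr
    _ ≤ #{w ∈ S | G.Adj u w} * #Sᶜ := by gcongr; exact hdeg u hu

end IsPDS

theorem exists_pds_half_general {V : Type*} [Fintype V] (G : SimpleGraph V)
    (h3 : 3 ≤ Fintype.card V) :
    ∃ S : Set V,
      (S.ncard = (Fintype.card V + 1) / 2 ∨ S.ncard = (Fintype.card V + 1) / 2 + 1) ∧
      IsPDS G S := by
  classical
  set s := (Fintype.card V + 1) / 2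
  obtain ⟨S, hSmem, hmin⟩ := exists_min_image (powersetCard s univ)
    (fun T ↦ #(G.interedges T Tᶜ)) (powersetCard_nonempty.mpr (by rw [card_univ]; omega))
  have hS : #S = s := (mem_powersetCard.mp hSmem).2
  have hSc : #Sᶜ = Fintype.card V - s := by rw [card_compl, hS]
  by_cases hgood : ∀ u ∈ S, #{w ∈ Sᶜ | G.Adj u w} ≤ #{w ∈ S | G.Adj u w}
  · exact ⟨S, .inl (by rw [Set.ncard_coe_finset, hS]),
      isPDS_of_forall_card_le G (by omega) (by omega) hgood⟩
  push Not at hgood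
  obtain ⟨u, hu, hgain⟩ := hgood
  have hA : #(insert u Sᶜ) = Fintype.card V - s + 1 := by
    rw [card_insert_of_notMem (by simpa using hu), hSc]
  have hAc : #(insert u Sᶜ)ᶜ = s - 1 := by rw [card_compl, hA]; omega
  refine ⟨(insert u Sᶜ : Finset V), by rw [Set.ncard_coe_finset, hA]; omega,
    isPDS_of_forall_card_lt G (by omega) (by omega) (by omega) ?_⟩
  refine G.card_filter_adj_compl_lt_of_min_cut (fun T hT ↦ hmin T ?_) hu hgain
  exact mem_powersetCard.mpr ⟨subset_univ T, hT.trans hS⟩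

/-- Theorem 4 of the paper: every connected graph with at least 3 vertices has a
PDS of size `⌈|V|/2⌉` or `⌈|V|/2⌉ + 1`. -/
theorem exists_pds_half {V : Type*} [Fintype V] (G : SimpleGraph V)
    (hconn : G.Connected) (h3 : 3 ≤ Fintype.card V) :
    ∃ S : Set V,
      (S.ncard = (Fintype.card V + 1) / 2 ∨ S.ncard = (Fintype.card V + 1) / 2 + 1) ∧
      IsPDS G S :=
  exists_pds_half_general G h3
end

section
/- Let G=(V,E) be a connected simple graph with maximum degree Δ, and let S ⊊ V be such that G[S] is a proportionally dense subgraph. Then |S| ≤ ⌊(|V|·(Δ−1) + 1)/Δ⌋. -/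
open SimpleGraph

/-- Lemma 9 of the paper: any PDS `S` satisfies `|S| ≤ ⌊(|V|(Δ-1)+1)/Δ⌋`. -/
theorem pds_upper_bound {V : Type*} [Fintype V] (G : SimpleGraph V)
    [DecidableRel G.Adj] (hconn : G.Connected)
    (S : Set V) (hPDS : IsPDS G S) :
    S.ncard ≤ (Fintype.card V * (G.maxDegree - 1) + 1) / G.maxDegree := by
  classical
  obtain ⟨hsub, hs2, hineq⟩ := hPDS
  set n := Fintype.card V with hn
  set s := S.ncard with hs
  set Δ := G.maxDegree with hΔ
  -- S nonempty, Sᶜ nonempty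
  have hSne : S.Nonempty := Set.nonempty_of_ncard_ne_zero (by omega)
  obtain ⟨y, hy⟩ : ∃ y, y ∉ S := by
    by_contra h
    push_neg at h
    exact hsub.2 (fun x _ => h x)
  obtain ⟨x, hx⟩ := hSne
  obtain ⟨p⟩ := hconn.preconnected x y
  obtain ⟨d, _, hdS, hdS'⟩ := p.exists_boundary_dart S hx hy
  set u := d.fst with hu
  have hadj : G.Adj u d.snd := d.adj
  -- degIn Sᶜ u ≥ 1
  have hmem : d.snd ∈ Sᶜ ∩ G.neighborSet u := ⟨hdS', hadj⟩
  have h1 : 1 ≤ degIn G Sᶜ u := by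
    have : 0 < (Sᶜ ∩ G.neighborSet u).ncard :=
      Set.ncard_pos (Set.toFinite _) |>.mpr ⟨d.snd, hmem⟩
    exact this
  -- degree splits
  have hsplit : degIn G S u + degIn G Sᶜ u = G.degree u := by
    have hN : (G.neighborSet u).ncard = G.degree u := by
      rw [← G.card_neighborFinset_eq_degree u, neighborFinset_def,
        Set.ncard_eq_toFinset_card']
    rw [← hN]
    unfold degIn
    rw [Set.inter_comm S, Set.inter_comm Sᶜ, ← Set.diff_eq,
      ← Set.ncard_inter_add_ncard_diff_eq_ncard (G.neighborSet u) S (Set.toFinite _)]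
  have hdeg : G.degree u ≤ Δ := G.degree_le_maxDegree u
  have hΔ1 : 1 ≤ Δ := by omega
  have hSd : degIn G S u ≤ Δ - 1 := by omega
  -- cardinalities
  have hcompl : s + Sᶜ.ncard = n := by
    rw [hs, hn]
    simpa using Set.ncard_add_ncard_compl S
  have hsn : s ≤ n := by omega
  have hcompl' : Sᶜ.ncard = n - s := by omega
  -- main inequality
  have hkey : s - 1 ≤ (Δ - 1) * (n - s) := by
    calc s - 1 ≤ degIn G Sᶜ u * (s - 1) := Nat.le_mul_of_pos_left _ h1
    _ ≤ degIn G S u * Sᶜ.ncard := hineq u hdS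
    _ = degIn G S u * (n - s) := by rw [hcompl']
    _ ≤ (Δ - 1) * (n - s) := Nat.mul_le_mul_right _ hSd
  clear_value n s Δ
  rw [Nat.le_div_iff_mul_le (by omega)]
  obtain ⟨e, rfl⟩ : ∃ e, Δ = e + 1 := ⟨Δ - 1, by omega⟩
  obtain ⟨m, rfl⟩ : ∃ m, n = s + m := ⟨n - s, by omega⟩
  simp only [Nat.add_sub_cancel_left, Nat.add_sub_cancel] at hkey ⊢
  have hk : s ≤ e * m + 1 := by
    have h2 : s - 1 + 1 = s := by omega
    calc s = s - 1 + 1 := h2.symm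
    _ ≤ e * m + 1 := Nat.add_le_add_right hkey 1
  calc s * (e + 1) = s * e + s := by ring
  _ ≤ s * e + (e * m + 1) := Nat.add_le_add_left hk _
  _ = (s + m) * e + 1 := by ring
end

section
/- Let G=(V,E) be a connected cubic (3-regular) simple graph on n vertices, and let S ⊊ V be such that G[S] is a proportionally dense subgraph. Then |S| ≤ ⌊(2n+1)/3⌋. -/
/-!
If `3|S| > 2n + 1`, then `|S| - 1 > 2|Sᶜ|`. A vertex of `S` with `b ≥ 1` neighbours outside `S`
has at most `2` inside, so `b (|S| - 1) > 2 |Sᶜ| ≥ d_S(u) |Sᶜ|` would violate the PDS inequality.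
Hence no edge leaves `S`, which is impossible in a connected graph as `∅ ≠ S ≠ V`.
-/

open SimpleGraph

theorem degIn_add_degIn_compl {V : Type*} [Finite V] (G : SimpleGraph V) (S : Set V) (u : V) :
    degIn G S u + degIn G Sᶜ u = (G.neighborSet u).ncard := by
  rw [degIn, degIn, Set.inter_comm, ← Set.sdiff_eq_compl_inter,
    Set.ncard_inter_add_ncard_sdiff_eq_ncard]

section

variable {V : Type*} {G : SimpleGraph V}

theorem SimpleGraph.Connected.exists_adj_of_mem_of_notMem (hconn : G.Connected) {S : Set V}
    {u w : V} (hu : u ∈ S) (hw : w ∉ S) : ∃ x ∈ S, ∃ y ∉ S, G.Adj x y := by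
  obtain ⟨d, -, hdS, hdS'⟩ := (hconn u w).some.exists_boundary_dart S hu hw
  exact ⟨d.fst, hdS, d.snd, hdS', d.adj⟩

theorem IsPDS.degIn_compl_eq_zero [Finite V] {S : Set V} (hS : IsPDS G S) {d : ℕ}
    (hdeg : ∀ v, (G.neighborSet v).ncard ≤ d) (hsize : (d - 1) * Sᶜ.ncard < S.ncard - 1)
    {u : V} (hu : u ∈ S) : degIn G Sᶜ u = 0 := by
  by_contra hout
  have hin : degIn G S u ≤ d - 1 := by
    have := degIn_add_degIn_compl G S u
    have := hdeg u
    omega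
  have := calc
    degIn G S u * Sᶜ.ncard ≤ (d - 1) * Sᶜ.ncard := Nat.mul_le_mul_right _ hin
    _ < S.ncard - 1 := hsize
    _ ≤ degIn G Sᶜ u * (S.ncard - 1) := Nat.le_mul_of_pos_left _ (Nat.pos_of_ne_zero hout)
  exact absurd (hS.2.2 u hu) (not_le.mpr this)

end

/-- In a connected cubic graph on `n` vertices, any PDS has size at most
`⌊(2n+1)/3⌋`. -/
theorem pds_upper_bound_cubic {V : Type*} [Fintype V] (G : SimpleGraph V)
    (hconn : G.Connected) (hcubic : ∀ v : V, (G.neighborSet v).ncard = 3)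
    (S : Set V) (hPDS : IsPDS G S) :
    S.ncard ≤ (2 * Fintype.card V + 1) / 3 := by
  by_contra! hlarge
  rw [Nat.div_lt_iff_lt_mul three_pos] at hlarge
  have hcard : S.ncard + Sᶜ.ncard = Fintype.card V := by
    rw [Set.ncard_add_ncard_compl, Nat.card_eq_fintype_card]
  have hclosed : ∀ u ∈ S, degIn G Sᶜ u = 0 :=
    fun u => hPDS.degIn_compl_eq_zero (d := 3) (fun v => (hcubic v).le) (by omega)
  obtain ⟨u, hu⟩ : S.Nonempty := Set.nonempty_of_ncard_ne_zero (by omega)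
  obtain ⟨w, -, hw⟩ := Set.exists_of_ssubset hPDS.1
  obtain ⟨x, hx, y, hy, hxy⟩ := hconn.exists_adj_of_mem_of_notMem hu hw
  have hempty := hclosed x hx
  rw [degIn, Set.ncard_eq_zero] at hempty
  exact hempty.subset ⟨hy, hxy⟩
end

section
/- Let G be a Hamiltonian cubic graph on n vertices with vertices labeled by Z/nZ along a Hamiltonian cycle, and let P be a shift with parameter k' where ⌈(n−1)/3⌉ ≤ k' ≤ n−2. Then G[P] is a proportionally dense subgraph; in particular a good shift (k' = ⌈(n−1)/3⌉) induces a proportionally dense subgraph of size ⌊(2n+1)/3⌋. -/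
open SimpleGraph

/-- The set `{u, u+1, …, u+(m-1)}` of `m` consecutive vertices on the Hamiltonian
cycle `(0, 1, …, n-1)`. -/
def arc (n : ℕ) (u : ZMod n) (m : ℕ) : Set (ZMod n) :=
  (fun j : ℕ => u + (j : ZMod n)) '' {j : ℕ | j < m}

/-- `P = {u, u+1, …, u-k'-1}` (that is, `arc n u (n-k')`) is a *shift* with
parameter `k'` (where `2 ≤ k' ≤ n-2`) if both of its endpoints have exactly two
neighbors inside `P`. -/
def IsShift (n : ℕ) (G : SimpleGraph (ZMod n)) (k' : ℕ) (u : ZMod n) : Prop :=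
  2 ≤ k' ∧ k' ≤ n - 2 ∧
    degIn G (arc n u (n - k')) u = 2 ∧
    degIn G (arc n u (n - k')) (u + ((n - k' - 1 : ℕ) : ZMod n)) = 2

/-- A shift with parameter `k' ≥ ⌈(n-1)/3⌉` induces a PDS of a Hamiltonian cubic
graph; a good shift (`k' = ⌈(n-1)/3⌉`) induces a PDS of size `⌊(2n+1)/3⌋`.
(Here `⌈(n-1)/3⌉ = (n+1)/3` in natural number arithmetic.) -/
theorem shift_is_pds (n : ℕ) (G : SimpleGraph (ZMod n))
    (hcycle : ∀ i : ZMod n, G.Adj i (i + 1))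
    (hcubic : ∀ v : ZMod n, (G.neighborSet v).ncard = 3)
    (k' : ℕ) (hk : (n + 1) / 3 ≤ k') (u : ZMod n)
    (hshift : IsShift n G k' u) :
    IsPDS G (arc n u (n - k')) ∧
      (k' = (n + 1) / 3 → (arc n u (n - k')).ncard = (2 * n + 1) / 3) := by
  obtain ⟨hk2, hkn, hdu, hdv⟩ := hshift
  have hn4 : 4 ≤ n := by omega
  haveI : NeZero n := ⟨by omega⟩
  set m : ℕ := n - k' with hm
  set P : Set (ZMod n) := arc n u m with hP
  have hm2 : 2 ≤ m := by omega
  have hmn : m < n := by omega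
  -- injectivity and cardinality of the arc
  have hinj : Set.InjOn (fun j : ℕ => u + (j : ZMod n)) {j : ℕ | j < m} := by
    intro a ha b hb hab
    simp only [Set.mem_setOf_eq] at ha hb
    have hab' : (a : ZMod n) = (b : ZMod n) := by
      have := hab
      simpa using add_left_cancel this
    calc a = ((a : ZMod n)).val := (ZMod.val_cast_of_lt (by omega)).symm
      _ = ((b : ZMod n)).val := by rw [hab']
      _ = b := ZMod.val_cast_of_lt (by omega)
  have hPcard : P.ncard = m := by
    rw [hP, arc, Set.ncard_image_of_injOn hinj,
      show {j : ℕ | j < m} = ↑(Finset.range m) from by ext j; simp,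
      Set.ncard_coe_finset, Finset.card_range]
  have hPccard : Pᶜ.ncard = k' := by
    have := Set.ncard_add_ncard_compl P
    rw [hPcard, Nat.card_zmod] at this
    omega
  -- degree splitting
  have hdeg : ∀ v : ZMod n, degIn G P v + degIn G Pᶜ v = 3 := by
    intro v
    rw [← hcubic v, degIn, degIn, ← Set.ncard_union_eq
      (Disjoint.mono Set.inter_subset_left Set.inter_subset_left disjoint_compl_right)
      (Set.toFinite _) (Set.toFinite _)]
    congr 1
    rw [← Set.union_inter_distrib_right, Set.union_compl_self, Set.univ_inter]
  -- every vertex of P has at least two neighbors inside P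
  have hmain : ∀ v ∈ P, 2 ≤ degIn G P v := by
    intro v hv
    obtain ⟨j, hj, rfl⟩ := hv
    simp only [Set.mem_setOf_eq] at hj
    rcases eq_or_ne j 0 with rfl | hj0
    · simpa using hdu.ge
    rcases eq_or_ne j (m - 1) with rfl | hj1
    · exact le_of_eq (by rw [← hdv])
    -- interior vertex
    set v : ZMod n := u + (j : ZMod n) with hvdef
    have hvm : v - 1 ∈ P := by
      refine ⟨j - 1, by simpa using by omega, ?_⟩
      simp only
      rw [Nat.cast_sub (by omega : 1 ≤ j)]
      push_cast
      ring
    have hvp : v + 1 ∈ P := by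
      refine ⟨j + 1, by simpa using by omega, ?_⟩
      push_cast
      ring
    have hadjm : v - 1 ∈ G.neighborSet v := by
      have := (hcycle (v - 1)).symm
      simpa using this
    have hadjp : v + 1 ∈ G.neighborSet v := hcycle v
    have hne : v - 1 ≠ v + 1 := by
      intro h
      have h2 : ((2 : ℕ) : ZMod n) = 0 := by push_cast; linear_combination -h
      rw [ZMod.natCast_eq_zero_iff] at h2
      have := Nat.le_of_dvd (by norm_num) h2
      omega
    calc (2 : ℕ) = ({v - 1, v + 1} : Set (ZMod n)).ncard := (Set.ncard_pair hne).symm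
      _ ≤ (P ∩ G.neighborSet v).ncard := by
          apply Set.ncard_le_ncard _ (Set.toFinite _)
          intro x hx
          rcases hx with rfl | hx
          · exact ⟨hvm, hadjm⟩
          · rw [Set.mem_singleton_iff] at hx
            subst hx
            exact ⟨hvp, hadjp⟩
  have hk3 : n - 1 ≤ 3 * k' := by omega
  refine ⟨⟨?_, by rw [hPcard]; omega, ?_⟩, ?_⟩
  · rw [Set.ssubset_univ_iff]
    intro h
    rw [h, Set.ncard_univ, Nat.card_zmod] at hPcard
    omega
  · intro v hv
    have h2 := hmain v hv
    have h3 := hdeg v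
    rw [hPcard, hPccard]
    calc degIn G Pᶜ v * (m - 1) ≤ 1 * (m - 1) :=
          Nat.mul_le_mul_right _ (by omega)
      _ ≤ 2 * k' := by omega
      _ ≤ degIn G P v * k' := Nat.mul_le_mul_right _ h2
  · intro hkeq
    rw [hPcard]
    omega
end
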